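/- arXiv:2604.10272 — 7 statements merged into one kernel-verified Lean document; each statement's English description precedes it below -/
import Mathlib

section
/- Let N ≥ 2, let K : Fin N → Fin N → ℝ satisfy K i j = K j i for all i, j, and let θ : Fin N → ℝ. Set w i j = K i j * cos(θ j − θ i), and define J(θ) i j = w i j for i ≠ j, J(θ) i i = −∑_{ℓ ≠ i} w i ℓ. Assume w i j ≥ 0 for all i ≠ j, and assume the simple graph on Fin N with adjacency i ∼ j iff i ≠ j and w i j > 0 is connected. Then for every x : Fin N → ℝ that is not a constant vector, ∑_i ∑_j x i * J(θ) i j * x j < 0. Consequently, the reduced matrix J̃(θ), obtained from J(θ) by deleting row 0 and column 0, is negative definite and in particular invertible. -/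
open Finset Real Matrix

lemma exists_adj_ne_of_walk {N : ℕ} {G : SimpleGraph (Fin N)} (x : Fin N → ℝ) :
    ∀ {u v : Fin N} (p : G.Walk u v), x u ≠ x v → ∃ a b, G.Adj a b ∧ x a ≠ x b := by
  intro u v p
  induction p with
  | nil => intro h; exact absurd rfl h
  | @cons a b c h p ih =>
    intro hne
    by_cases hab : x a = x b
    · exact ih (fun hbc => hne (hab.trans hbc))
    · exact ⟨a, b, h, hab⟩

/-- Fiedler-type statement: for connected coupling graph with positive effective edge weights,
the quadratic form of the Jacobian is strictly negative on nonconstant vectors, and the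
reduced Jacobian (row and column 0 deleted) is negative definite, hence invertible. -/
theorem reduced_jacobian_negative_definite (N : ℕ) (hN : 2 ≤ N) [NeZero N]
    (K : Fin N → Fin N → ℝ) (hK : ∀ i j, K i j = K j i)
    (θ : Fin N → ℝ)
    (w : Fin N → Fin N → ℝ) (hw : ∀ i j, w i j = K i j * Real.cos (θ j - θ i))
    (J : Matrix (Fin N) (Fin N) ℝ)
    (hJ : ∀ i j, J i j =
      if i = j then -(∑ ℓ ∈ Finset.univ.erase i, w i ℓ) else w i j)
    (hpos : ∀ i j, i ≠ j → 0 ≤ w i j)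
    (G : SimpleGraph (Fin N))
    (hG : ∀ i j, G.Adj i j ↔ i ≠ j ∧ 0 < w i j)
    (hconn : G.Connected) :
    (∀ x : Fin N → ℝ, (¬ ∃ c : ℝ, ∀ i, x i = c) →
      ∑ i, ∑ j, x i * J i j * x j < 0) ∧
    (-(J.submatrix (fun i : {i : Fin N // i ≠ 0} => (i : Fin N))
        (fun j : {j : Fin N // j ≠ 0} => (j : Fin N)))).PosDef ∧
    IsUnit (J.submatrix (fun i : {i : Fin N // i ≠ 0} => (i : Fin N))
        (fun j : {j : Fin N // j ≠ 0} => (j : Fin N))) := by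
  have hwsymm : ∀ i j, w i j = w j i := by
    intro i j
    rw [hw, hw, hK i j, ← Real.cos_neg, neg_sub]
  have hJsymm : ∀ i j, J i j = J j i := by
    intro i j
    rcases eq_or_ne i j with rfl | hij
    · rfl
    · rw [hJ, hJ, if_neg hij, if_neg (Ne.symm hij), hwsymm]
  -- quadratic form identity
  have hQ1 : ∀ x : Fin N → ℝ,
      ∑ i, ∑ j, x i * J i j * x j = ∑ i, ∑ j, w i j * (x i * x j - x i ^ 2) := by
    intro x
    refine Finset.sum_congr rfl fun i _ => ?_
    rw [← Finset.add_sum_erase _ (fun j => x i * J i j * x j) (Finset.mem_univ i),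
        ← Finset.add_sum_erase _ (fun j => w i j * (x i * x j - x i ^ 2)) (Finset.mem_univ i)]
    have h0 : w i i * (x i * x i - x i ^ 2) = 0 := by ring
    rw [h0]
    have hdi : x i * J i i * x i = ∑ j ∈ Finset.univ.erase i, -(w i j * x i ^ 2) := by
      rw [hJ i i, if_pos rfl, ← Finset.sum_neg_distrib, Finset.mul_sum, Finset.sum_mul]
      exact Finset.sum_congr rfl fun j _ => by ring
    rw [hdi, zero_add, ← Finset.sum_add_distrib]
    refine Finset.sum_congr rfl fun j hj => ?_
    rw [hJ i j, if_neg (Finset.ne_of_mem_erase hj).symm]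
    ring
  have hQ2 : ∀ x : Fin N → ℝ,
      ∑ i, ∑ j, w i j * (x i * x j - x i ^ 2) = ∑ i, ∑ j, w i j * (x i * x j - x j ^ 2) := by
    intro x
    rw [Finset.sum_comm]
    refine Finset.sum_congr rfl fun i _ => Finset.sum_congr rfl fun j _ => ?_
    rw [hwsymm j i]
    ring
  have key : ∀ x : Fin N → ℝ,
      ∑ i, ∑ j, x i * J i j * x j = -(1/2) * ∑ i, ∑ j, w i j * (x i - x j) ^ 2 := by
    intro x
    have h2 : (∑ i, ∑ j, x i * J i j * x j) + (∑ i, ∑ j, x i * J i j * x j)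
        = -(∑ i, ∑ j, w i j * (x i - x j) ^ 2) := by
      rw [hQ1 x]
      nth_rewrite 2 [hQ2 x]
      rw [← Finset.sum_neg_distrib, ← Finset.sum_add_distrib]
      refine Finset.sum_congr rfl fun i _ => ?_
      rw [← Finset.sum_neg_distrib, ← Finset.sum_add_distrib]
      exact Finset.sum_congr rfl fun j _ => by ring
    linarith
  -- strict negativity on nonconstant vectors
  have main : ∀ x : Fin N → ℝ, (¬ ∃ c : ℝ, ∀ i, x i = c) →
      ∑ i, ∑ j, x i * J i j * x j < 0 := by
    intro x hx
    have hne : ∃ i j : Fin N, x i ≠ x j := by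
      by_contra h
      push_neg at h
      exact hx ⟨x 0, fun i => h i 0⟩
    obtain ⟨i, j, hij⟩ := hne
    obtain ⟨p⟩ := (hconn i j)
    obtain ⟨a, b, hadj, hab⟩ := exists_adj_ne_of_walk x p hij
    obtain ⟨hab1, hab2⟩ := (hG a b).mp hadj
    have hterm_nonneg : ∀ i j : Fin N, 0 ≤ w i j * (x i - x j) ^ 2 := by
      intro i j
      rcases eq_or_ne i j with rfl | hij'
      · simp
      · exact mul_nonneg (hpos i j hij') (sq_nonneg _)
    have hS : 0 < ∑ i, ∑ j, w i j * (x i - x j) ^ 2 := by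
      refine Finset.sum_pos' (fun i _ => Finset.sum_nonneg fun j _ => hterm_nonneg i j)
        ⟨a, Finset.mem_univ a, ?_⟩
      refine Finset.sum_pos' (fun j _ => hterm_nonneg a j) ⟨b, Finset.mem_univ b, ?_⟩
      exact mul_pos hab2 (by have := sub_ne_zero.mpr hab; positivity)
    rw [key x]
    nlinarith
  set Jr : Matrix {i : Fin N // i ≠ 0} {i : Fin N // i ≠ 0} ℝ :=
    J.submatrix (fun i : {i : Fin N // i ≠ 0} => (i : Fin N))
      (fun j : {j : Fin N // j ≠ 0} => (j : Fin N)) with hJr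
  have herm : (-Jr).IsHermitian := by
    ext i j
    simp only [Matrix.conjTranspose_apply, Matrix.neg_apply, Matrix.submatrix_apply, hJr,
      star_neg, star_trivial, neg_inj]
    exact hJsymm _ _
  have hsum0 : ∀ (F : Fin N → ℝ), F 0 = 0 →
      ∑ i, F i = ∑ i : {i : Fin N // i ≠ 0}, F ↑i := by
    intro F h0
    rw [← Finset.sum_erase Finset.univ h0]
    exact Finset.sum_subtype _ (fun x => by simp) F
  have hpd : (-Jr).PosDef := by
    refine Matrix.posDef_iff_dotProduct_mulVec.mpr ⟨herm, fun y hy => ?_⟩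
    set x : Fin N → ℝ := fun i => if h : i = 0 then 0 else y ⟨i, h⟩ with hxdef
    have hx0 : x 0 = 0 := by simp [hxdef]
    have hxc : ∀ i : {i : Fin N // i ≠ 0}, x ↑i = y i := fun i => dif_neg i.2
    have hnc : ¬ ∃ c, ∀ i, x i = c := by
      rintro ⟨c, hc⟩
      apply hy
      have hc0 : c = 0 := (hc 0).symm.trans hx0
      funext i
      rw [← hxc i, hc, hc0]
      rfl
    have hQ := main x hnc
    have e1 : ∑ i, ∑ j, x i * J i j * x j
        = ∑ i : {i : Fin N // i ≠ 0}, ∑ j : {j : Fin N // j ≠ 0}, y i * J ↑i ↑j * y j := by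
      rw [hsum0 _ (by simp [hx0])]
      refine Finset.sum_congr rfl fun i _ => ?_
      rw [hsum0 _ (by simp [hx0])]
      exact Finset.sum_congr rfl fun j _ => by rw [hxc i, hxc j]
    have e2 : star y ⬝ᵥ ((-Jr) *ᵥ y)
        = -(∑ i : {i : Fin N // i ≠ 0}, ∑ j : {j : Fin N // j ≠ 0}, y i * J ↑i ↑j * y j) := by
      simp only [dotProduct, Matrix.mulVec, Matrix.neg_apply, Matrix.submatrix_apply,
        hJr, Pi.star_apply, star_trivial]
      rw [← Finset.sum_neg_distrib]
      refine Finset.sum_congr rfl fun i _ => ?_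
      rw [← Finset.sum_neg_distrib, Finset.mul_sum]
      exact Finset.sum_congr rfl fun j _ => by ring
    rw [e2, ← e1]
    linarith
  refine ⟨main, hpd, ?_⟩
  have hunit : IsUnit (-Jr) :=
    (Matrix.isUnit_iff_isUnit_det _).mpr (isUnit_iff_ne_zero.mpr hpd.det_pos.ne')
  have := hunit.neg
  rwa [neg_neg] at this
end

section
/- Let N ≥ 1, let K : Fin N → Fin N → ℝ satisfy K i j = K j i for all i, j, let ω : Fin N → ℝ with ω^c_i = ω i − (1/N) * ∑_ℓ ω ℓ, and let E(θ) = −∑_i ω^c_i * θ i − ∑_{i < j} K i j * cos(θ j − θ i). Suppose θ : ℝ → (Fin N → ℝ) is differentiable and solves the rotating-frame Kuramoto ODE: for all t and all i, (θ i)'(t) = ω^c_i + ∑_j K i j * sin(θ j (t) − θ i (t)). Then for every t, the derivative of t ↦ E(θ(t)) equals −∑_i ((θ i)'(t))^2 ≤ 0; in particular t ↦ E(θ(t)) is monotone nonincreasing. -/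
open Finset Real

/-- The energy `E` is a Lyapunov function for the rotating-frame Kuramoto flow: along a
solution, `d/dt E(θ(t)) = −∑ᵢ ((θᵢ)'(t))² ≤ 0`, so `t ↦ E(θ(t))` is nonincreasing. -/
theorem energy_is_lyapunov (N : ℕ) (hN : 1 ≤ N)
    (K : Fin N → Fin N → ℝ) (hK : ∀ i j, K i j = K j i)
    (ω : Fin N → ℝ)
    (ωc : Fin N → ℝ) (hωc : ∀ i, ωc i = ω i - (1 / (N : ℝ)) * ∑ ℓ, ω ℓ)
    (E : (Fin N → ℝ) → ℝ)
    (hE : ∀ θ, E θ = -∑ i, ωc i * θ i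
      - ∑ i, ∑ j ∈ Finset.Ioi i, K i j * Real.cos (θ j - θ i))
    (θ : ℝ → Fin N → ℝ)
    (hode : ∀ t i, HasDerivAt (fun s => θ s i)
      (ωc i + ∑ j, K i j * Real.sin (θ t j - θ t i)) t) :
    (∀ t, HasDerivAt (fun s => E (θ s))
        (-∑ i, (deriv (fun s => θ s i) t) ^ 2) t ∧
      -∑ i, (deriv (fun s => θ s i) t) ^ 2 ≤ 0) ∧
    (∀ t₁ t₂, t₁ ≤ t₂ → E (θ t₂) ≤ E (θ t₁)) := by
  have hderiv : ∀ t i, deriv (fun s => θ s i) t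
      = ωc i + ∑ j, K i j * Real.sin (θ t j - θ t i) := fun t i => (hode t i).deriv
  have hmain : ∀ t, HasDerivAt (fun s => E (θ s))
      (-∑ i, (deriv (fun s => θ s i) t) ^ 2) t := by
    intro t
    set x : Fin N → ℝ := θ t with hx
    set D : Fin N → ℝ := fun i => ωc i + ∑ j, K i j * Real.sin (x j - x i) with hD
    have hDd : ∀ i, deriv (fun s => θ s i) t = D i := fun i => hderiv t i
    have hfun : (fun s => E (θ s))
        = fun s => -∑ i, ωc i * θ s i
            - ∑ i, ∑ j ∈ Finset.Ioi i, K i j * Real.cos (θ s j - θ s i) :=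
      funext fun s => hE (θ s)
    have h1 : HasDerivAt (fun s => E (θ s))
        (-∑ i, ωc i * D i
          - ∑ i, ∑ j ∈ Finset.Ioi i, K i j * (-Real.sin (x j - x i) * (D j - D i))) t := by
      rw [hfun]
      apply HasDerivAt.sub
      · exact (HasDerivAt.fun_sum (fun i _ => (hode t i).const_mul (ωc i))).neg
      · refine HasDerivAt.fun_sum (fun i _ => HasDerivAt.fun_sum (fun j _ => ?_))
        exact (((hode t j).sub (hode t i)).cos).const_mul (K i j)
    have key : -∑ i, ωc i * D i
          - ∑ i, ∑ j ∈ Finset.Ioi i, K i j * (-Real.sin (x j - x i) * (D j - D i))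
        = -∑ i, (deriv (fun s => θ s i) t) ^ 2 := by
      simp only [hDd]
      -- the symmetric off-diagonal summand
      set G : Fin N → Fin N → ℝ := fun i j => K i j * (Real.sin (x j - x i) * (D j - D i))
        with hG
      have hGsymm : ∀ i j, G i j = G j i := by
        intro i j
        simp only [hG]
        rw [hK i j, show x i - x j = -(x j - x i) by ring, Real.sin_neg]
        ring
      have hGdiag : ∀ i, G i i = 0 := by
        intro i; simp [hG]
      have hS : ∑ i, ∑ j ∈ Finset.Ioi i, (G j i + G i j) = ∑ i, ∑ j, G j i := by
        rw [Finset.sum_sum_Ioi_add_eq_sum_sum_off_diag]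
        refine Finset.sum_congr rfl fun i _ => ?_
        rw [← Finset.sum_compl_add_sum {i} (fun j => G j i)]
        simp only [Finset.sum_singleton, hGdiag, add_zero]
      have hS2 : ∑ i, ∑ j ∈ Finset.Ioi i, G i j = (1/2) * ∑ i, ∑ j, G j i := by
        rw [← hS]
        rw [Finset.mul_sum]
        refine Finset.sum_congr rfl fun i _ => ?_
        rw [Finset.mul_sum]
        refine Finset.sum_congr rfl fun j _ => ?_
        rw [hGsymm i j]; ring
      -- the full double sum of G
      have hT : ∑ i, ∑ j, G j i = 2 * ∑ i, D i * (ωc i - D i) := by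
        have expand : ∀ i j, G j i = K i j * Real.sin (x i - x j) * D i
            - K i j * Real.sin (x i - x j) * D j := by
          intro i j
          simp only [hG, hK j i]; ring
        have swap : ∑ i, ∑ j, K i j * Real.sin (x i - x j) * D j
            = -∑ i, ∑ j, K i j * Real.sin (x i - x j) * D i := by
          rw [Finset.sum_comm, ← Finset.sum_neg_distrib]
          refine Finset.sum_congr rfl fun i _ => ?_
          rw [← Finset.sum_neg_distrib]
          refine Finset.sum_congr rfl fun j _ => ?_
          rw [hK j i, show x j - x i = -(x i - x j) by ring, Real.sin_neg]
          ring
        have col : ∀ i, ∑ j, K i j * Real.sin (x i - x j) * D i = D i * (ωc i - D i) := by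
          intro i
          have : ∑ j, K i j * Real.sin (x i - x j) = ωc i - D i := by
            have : D i - ωc i = ∑ j, K i j * Real.sin (x j - x i) := by
              simp [hD]
            have h2 : ∑ j, K i j * Real.sin (x i - x j)
                = -∑ j, K i j * Real.sin (x j - x i) := by
              rw [← Finset.sum_neg_distrib]
              refine Finset.sum_congr rfl fun j _ => ?_
              rw [show x i - x j = -(x j - x i) by ring, Real.sin_neg]; ring
            rw [h2, ← this]; ring
          calc ∑ j, K i j * Real.sin (x i - x j) * D i
              = (∑ j, K i j * Real.sin (x i - x j)) * D i := by rw [Finset.sum_mul]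
            _ = D i * (ωc i - D i) := by rw [this]; ring
        calc ∑ i, ∑ j, G j i
            = ∑ i, ∑ j, (K i j * Real.sin (x i - x j) * D i
                - K i j * Real.sin (x i - x j) * D j) := by
              refine Finset.sum_congr rfl fun i _ => Finset.sum_congr rfl fun j _ => ?_
              exact expand i j
          _ = ∑ i, ∑ j, K i j * Real.sin (x i - x j) * D i
              - ∑ i, ∑ j, K i j * Real.sin (x i - x j) * D j := by
              rw [← Finset.sum_sub_distrib]
              refine Finset.sum_congr rfl fun i _ => ?_
              rw [Finset.sum_sub_distrib]
          _ = 2 * ∑ i, ∑ j, K i j * Real.sin (x i - x j) * D i := by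
              rw [swap]; ring
          _ = 2 * ∑ i, D i * (ωc i - D i) := by
              congr 1
              exact Finset.sum_congr rfl fun i _ => col i
      have hinner : ∀ i, ∑ j ∈ Finset.Ioi i, K i j * (-Real.sin (x j - x i) * (D j - D i))
          = -∑ j ∈ Finset.Ioi i, G i j := by
        intro i
        rw [← Finset.sum_neg_distrib]
        refine Finset.sum_congr rfl fun j _ => ?_
        simp only [hG]; ring
      calc -∑ i, ωc i * D i
            - ∑ i, ∑ j ∈ Finset.Ioi i, K i j * (-Real.sin (x j - x i) * (D j - D i))
          = -∑ i, ωc i * D i + ∑ i, ∑ j ∈ Finset.Ioi i, G i j := by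
            rw [show ∑ i, ∑ j ∈ Finset.Ioi i, K i j * (-Real.sin (x j - x i) * (D j - D i))
                = -∑ i, ∑ j ∈ Finset.Ioi i, G i j by
              rw [← Finset.sum_neg_distrib]
              exact Finset.sum_congr rfl fun i _ => hinner i]
            ring
        _ = -∑ i, ωc i * D i + (1/2) * (2 * ∑ i, D i * (ωc i - D i)) := by
            rw [hS2, hT]
        _ = -∑ i, (ωc i * D i - D i * (ωc i - D i)) := by
            rw [Finset.sum_sub_distrib]; ring
        _ = -∑ i, D i ^ 2 := by
            congr 1
            exact Finset.sum_congr rfl fun i _ => by ring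
    rw [← key]
    exact h1
  refine ⟨fun t => ⟨hmain t, ?_⟩, ?_⟩
  · simp only [neg_nonpos]
    exact Finset.sum_nonneg fun i _ => sq_nonneg _
  · intro t₁ t₂ h
    have : Antitone (fun s => E (θ s)) := by
      apply antitone_of_deriv_nonpos
      · exact fun s => ((hmain s).differentiableAt)
      · intro s
        rw [(hmain s).deriv]
        simp only [neg_nonpos]
        exact Finset.sum_nonneg fun i _ => sq_nonneg _
    exact this h
end

section
/- Let N ≥ 2, K : Fin N → Fin N → ℝ, ω : Fin N → ℝ with ω^c_i = ω i − (1/N) * ∑_ℓ ω ℓ, O ⊆ Fin N with 0 ∉ O, and t : Fin N → ℝ. Suppose θ : ℝ → (Fin N → ℝ) is differentiable at 0, satisfies θ(β) 0 = 0 for all β, and satisfies the nudged equilibrium condition: for all β and all i ≠ 0, ω^c_i + ∑_j K i j * sin(θ(β) j − θ(β) i) − β * (θ(β) i − t i) * [i ∈ O] = 0. Write θ* = θ(0), let J̃ be the reduced Jacobian (the submatrix of J(θ*) on indices i, j ≠ 0, where J(θ*) i j = K i j * cos(θ* j − θ* i) for i ≠ j and J(θ*) i i = −∑_{ℓ ≠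 i} K i ℓ * cos(θ* ℓ − θ* i)), and assume J̃ is invertible. Then the derivative of θ at 0, restricted to indices i ≠ 0, equals J̃⁻¹ applied to the error vector e, where e i = (θ* i − t i) * [i ∈ O] for i ≠ 0: that is, (θ i)'(0) = (J̃⁻¹.mulVec e) i for every i ≠ 0. -/
open Finset Real

/-- First-order phase response of the nudged equilibrium to the nudging strength: the
`β`-derivative of the nudged equilibrium at `β = 0`, restricted to unpinned indices, equals
the inverse reduced Jacobian applied to the output error vector. -/
theorem nudge_response (N : ℕ) (hN : 2 ≤ N) [NeZero N]
    (K : Fin N → Fin N → ℝ) (ω : Fin N → ℝ)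
    (ωc : Fin N → ℝ) (hωc : ∀ i, ωc i = ω i - (1 / (N : ℝ)) * ∑ ℓ, ω ℓ)
    (O : Finset (Fin N)) (hO : (0 : Fin N) ∉ O)
    (t : Fin N → ℝ)
    (θ : ℝ → Fin N → ℝ)
    (hdiff : DifferentiableAt ℝ θ 0)
    (hpin : ∀ β, θ β 0 = 0)
    (heq : ∀ β, ∀ i : Fin N, i ≠ 0 →
      ωc i + ∑ j, K i j * Real.sin (θ β j - θ β i)
        - β * (θ β i - t i) * (if i ∈ O then 1 else 0) = 0)
    (θstar : Fin N → ℝ) (hθstar : θstar = θ 0)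
    (Jred : Matrix {i : Fin N // i ≠ 0} {i : Fin N // i ≠ 0} ℝ)
    (hJred : ∀ i j : {i : Fin N // i ≠ 0}, Jred i j =
      if i = j then
        -(∑ ℓ ∈ Finset.univ.erase (i : Fin N),
            K i ℓ * Real.cos (θstar ℓ - θstar i))
      else K i j * Real.cos (θstar j - θstar i))
    (hinv : IsUnit Jred)
    (e : {i : Fin N // i ≠ 0} → ℝ)
    (he : ∀ i : {i : Fin N // i ≠ 0},
      e i = (θstar i - t i) * (if (i : Fin N) ∈ O then 1 else 0)) :
    ∀ i : {i : Fin N // i ≠ 0},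
      deriv (fun β => θ β i) 0 = Jred⁻¹.mulVec e i := by
  classical
  subst hθstar
  set d : Fin N → ℝ := fun j => deriv (fun β => θ β j) 0 with hd_def
  have hdiffj : ∀ j, DifferentiableAt ℝ (fun β => θ β j) 0 := fun j =>
    (differentiableAt_pi.mp hdiff) j
  have hd : ∀ j, HasDerivAt (fun β => θ β j) (d j) 0 := fun j => (hdiffj j).hasDerivAt
  have hd0 : d 0 = 0 := by
    have h0 : (fun β => θ β 0) = fun _ : ℝ => (0 : ℝ) := funext hpin
    simp [hd_def, h0]
  -- key derivative identity
  have key : ∀ i : Fin N, i ≠ 0 →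
      ∑ j, K i j * (Real.cos (θ 0 j - θ 0 i) * (d j - d i))
        = (θ 0 i - t i) * (if i ∈ O then 1 else 0) := by
    intro i hi
    set c : ℝ := (if i ∈ O then 1 else 0) with hc
    have hsum : HasDerivAt (fun β => ∑ j, K i j * Real.sin (θ β j - θ β i))
        (∑ j, K i j * (Real.cos (θ 0 j - θ 0 i) * (d j - d i))) 0 :=
      HasDerivAt.fun_sum fun j _ => (((hd j).sub (hd i)).sin).const_mul _
    have hβ : HasDerivAt (fun β : ℝ => β * (θ β i - t i) * c)
        ((1 * (θ 0 i - t i) + 0 * d i) * c) 0 :=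
      ((hasDerivAt_id 0).mul ((hd i).sub_const (t i))).mul_const c
    have hg : HasDerivAt
        (fun β => ωc i + ∑ j, K i j * Real.sin (θ β j - θ β i)
          - β * (θ β i - t i) * c)
        (∑ j, K i j * (Real.cos (θ 0 j - θ 0 i) * (d j - d i))
          - (1 * (θ 0 i - t i) + 0 * d i) * c) 0 :=
      (hsum.const_add (ωc i)).sub hβ
    have hfun : (fun β => ωc i + ∑ j, K i j * Real.sin (θ β j - θ β i)
          - β * (θ β i - t i) * c) = fun _ : ℝ => (0 : ℝ) :=
      funext fun β => heq β i hi
    rw [hfun] at hg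
    have := hg.unique (hasDerivAt_const 0 0)
    have h := this
    nlinarith [h]
  -- matrix equation
  set v : {i : Fin N // i ≠ 0} → ℝ := fun j => d j with hv
  have hmv : Jred.mulVec v = e := by
    funext i
    have hiK : (i : Fin N) ≠ 0 := i.2
    set c : Fin N → ℝ := fun j => K i j * Real.cos (θ 0 j - θ 0 i) with hcdef
    set G : Fin N → ℝ := fun j =>
      (if j = (i : Fin N) then -(∑ ℓ ∈ Finset.univ.erase (i : Fin N), c ℓ)
        else c j) * d j with hGdef
    have hsub : ∑ j ∈ Finset.univ.erase (0 : Fin N), G j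
        = ∑ j : {i : Fin N // i ≠ 0}, G (j : Fin N) :=
      Finset.sum_subtype _ (by intro x; simp) G
    have step1 : Jred.mulVec v i = ∑ j ∈ Finset.univ.erase (0 : Fin N), G j := by
      rw [Matrix.mulVec, dotProduct, hsub]
      refine Finset.sum_congr rfl fun j _ => ?_
      rw [hJred]
      by_cases h : j = i
      · subst h
        simp only [hGdef, hcdef, if_pos rfl, hv]
      · have h' : (j : Fin N) ≠ (i : Fin N) := fun hx => h (Subtype.ext hx)
        have h'' : ¬ i = j := fun hx => h hx.symm
        simp only [hGdef, hcdef, if_neg h', if_neg h'', hv]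
    have hi_mem : (i : Fin N) ∈ Finset.univ.erase (0 : Fin N) := by
      simp [Finset.mem_erase, hiK]
    have h2 : ∑ j ∈ (Finset.univ.erase (0 : Fin N)).erase (i : Fin N), G j
        = ∑ j ∈ (Finset.univ.erase (0 : Fin N)).erase (i : Fin N), c j * d j := by
      refine Finset.sum_congr rfl fun j hj => ?_
      have hne : j ≠ (i : Fin N) := (Finset.mem_erase.mp hj).1
      simp only [hGdef, if_neg hne]
    have h0mem : (0 : Fin N) ∈ Finset.univ.erase (i : Fin N) := by
      simp [Finset.mem_erase, Ne.symm hiK]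
    rw [step1, ← Finset.add_sum_erase _ _ hi_mem, h2, Finset.erase_right_comm,
      Finset.sum_erase_eq_sub h0mem,
      Finset.sum_erase_eq_sub (Finset.mem_univ (i : Fin N))]
    have hGi : G (i : Fin N) = -(∑ ℓ, c ℓ - c (i : Fin N)) * d i := by
      simp only [hGdef, if_pos rfl, eq_self_iff_true, if_true,
        Finset.sum_erase_eq_sub (Finset.mem_univ (i : Fin N))]
    rw [hGi, hd0]
    have hkey := key i hiK
    have hsplit : ∑ j, c j * (d j - d i) = ∑ j, c j * d j - (∑ j, c j) * d i := by
      rw [Finset.sum_mul, ← Finset.sum_sub_distrib]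
      exact Finset.sum_congr rfl fun j _ => by ring
    have hexp : ∑ j, c j * d j - (∑ j, c j) * d i = e i := by
      rw [he i, ← hsplit]
      simpa [hcdef, mul_assoc] using hkey
    linear_combination hexp
  have hdet : IsUnit Jred.det := (Matrix.isUnit_iff_isUnit_det Jred).mp hinv
  have : Jred⁻¹.mulVec e = v := by
    rw [← hmv, Matrix.mulVec_mulVec, Matrix.nonsing_inv_mul Jred hdet,
      Matrix.one_mulVec]
  intro i
  rw [this]
end

section
/- Let N ≥ 2, K : Fin N → Fin N → ℝ, ω : Fin N → ℝ with ω^c_i = ω i − (1/N) * ∑_ℓ ω ℓ, and let δ : Fin N → ℝ with δ 0 = 0 be a perturbation direction of the centered frequencies in reduced coordinates. Suppose ψ : ℝ → (Fin N → ℝ) is differentiable at 0, satisfies ψ(s) 0 = 0 for all s, and solves the perturbed equilibrium equations: for all s and all i ≠ 0, (ω^c_i + s * δ i) + ∑_j K i j * sin(ψ(s) j − ψ(s) i) = 0. Write θ* = ψ(0), let J̃ be the reduced Jacobian of J(θ*) on indices ≠ 0, and assume J̃ is invertible. Then the derivative of ψ at 0, restricted to indices i ≠ 0, equals −J̃⁻¹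 applied to δ restricted to indices ≠ 0: (ψ i)'(0) = −(J̃⁻¹.mulVec δ̃) i for every i ≠ 0. Consequently, for the output loss L(θ) = (1/2) * ∑_{i ∈ O} (θ i − t i)^2 with O ⊆ Fin N, 0 ∉ O, and t : Fin N → ℝ, the directional derivative d/ds L(ψ(s)) at s = 0 equals −⟨(J̃⁻¹)ᵀ.mulVec e, δ̃⟩, where e i = (θ* i − t i) * [i ∈ O] for i ≠ 0. -/
open Finset Real Matrix

/-- Implicit-function-theorem identity `∂θ*/∂ωᶜ = −J̃⁻¹`: the equilibrium phase response to a
frequency perturbation in direction `δ` is `−J̃⁻¹ δ̃`, and consequently the directional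
derivative of the output loss equals `−⟨(J̃⁻¹)ᵀ e, δ̃⟩`. -/
theorem frequency_response (N : ℕ) (hN : 2 ≤ N) [NeZero N]
    (K : Fin N → Fin N → ℝ) (ω : Fin N → ℝ)
    (ωc : Fin N → ℝ) (hωc : ∀ i, ωc i = ω i - (1 / (N : ℝ)) * ∑ ℓ, ω ℓ)
    (δ : Fin N → ℝ) (hδ : δ 0 = 0)
    (ψ : ℝ → Fin N → ℝ)
    (hdiff : DifferentiableAt ℝ ψ 0)
    (hpin : ∀ s, ψ s 0 = 0)
    (heq : ∀ s, ∀ i : Fin N, i ≠ 0 →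
      (ωc i + s * δ i) + ∑ j, K i j * Real.sin (ψ s j - ψ s i) = 0)
    (θstar : Fin N → ℝ) (hθstar : θstar = ψ 0)
    (Jred : Matrix {i : Fin N // i ≠ 0} {i : Fin N // i ≠ 0} ℝ)
    (hJred : ∀ i j : {i : Fin N // i ≠ 0}, Jred i j =
      if i = j then
        -(∑ ℓ ∈ Finset.univ.erase (i : Fin N),
            K i ℓ * Real.cos (θstar ℓ - θstar i))
      else K i j * Real.cos (θstar j - θstar i))
    (hinv : IsUnit Jred)
    (δred : {i : Fin N // i ≠ 0} → ℝ) (hδred : ∀ i, δred i = δ i)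
    (O : Finset (Fin N)) (hO : (0 : Fin N) ∉ O)
    (t : Fin N → ℝ)
    (L : (Fin N → ℝ) → ℝ)
    (hL : ∀ θ, L θ = (1 / 2) * ∑ i ∈ O, (θ i - t i) ^ 2)
    (e : {i : Fin N // i ≠ 0} → ℝ)
    (he : ∀ i : {i : Fin N // i ≠ 0},
      e i = (θstar i - t i) * (if (i : Fin N) ∈ O then 1 else 0)) :
    (∀ i : {i : Fin N // i ≠ 0},
      deriv (fun s => ψ s i) 0 = -(Jred⁻¹.mulVec δred) i) ∧
    deriv (fun s => L (ψ s)) 0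
      = -(dotProduct ((Jred⁻¹)ᵀ.mulVec e) δred) := by
  subst hθstar
  set d : Fin N → ℝ := fun j => deriv (fun s => ψ s j) 0 with hd
  have hcoord : ∀ j : Fin N, DifferentiableAt ℝ (fun s => ψ s j) 0 := by
    intro j
    exact (differentiableAt_pi.mp hdiff) j
  have hD : ∀ j, HasDerivAt (fun s => ψ s j) (d j) 0 := fun j => (hcoord j).hasDerivAt
  have hd0 : d 0 = 0 := by
    have : (fun s => ψ s 0) = fun _ : ℝ => (0 : ℝ) := funext hpin
    simp [hd, this]
  -- key derivative identity
  have key : ∀ i : Fin N, i ≠ 0 →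
      δ i + ∑ j, K i j * Real.cos (ψ 0 j - ψ 0 i) * (d j - d i) = 0 := by
    intro i hi
    set D : ℝ := δ i + ∑ j, K i j * Real.cos (ψ 0 j - ψ 0 i) * (d j - d i) with hDdef
    have hF : HasDerivAt (fun s => (ωc i + s * δ i) +
        ∑ j, K i j * Real.sin (ψ s j - ψ s i)) D 0 := by
      have h1 : HasDerivAt (fun s : ℝ => ωc i + s * δ i) (δ i) 0 := by
        simpa using ((hasDerivAt_id (0:ℝ)).mul_const (δ i)).const_add (ωc i)
      have h2 : HasDerivAt (fun s => ∑ j, K i j * Real.sin (ψ s j - ψ s i))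
          (∑ j, K i j * (Real.cos (ψ 0 j - ψ 0 i) * (d j - d i))) 0 := by
        apply HasDerivAt.fun_sum
        intro j _
        have hsub : HasDerivAt (fun s => ψ s j - ψ s i) (d j - d i) 0 :=
          (hD j).sub (hD i)
        exact ((Real.hasDerivAt_sin (ψ 0 j - ψ 0 i)).comp 0 hsub).const_mul (K i j)
      have := h1.add h2
      refine this.congr_deriv ?_
      rw [hDdef]
      congr 1
      apply Finset.sum_congr rfl
      intro j _
      ring
    have hF0 : (fun s => (ωc i + s * δ i) +
        ∑ j, K i j * Real.sin (ψ s j - ψ s i)) = fun _ : ℝ => (0:ℝ) := by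
      funext s; exact heq s i hi
    have : HasDerivAt (fun _ : ℝ => (0:ℝ)) D 0 := hF0 ▸ hF
    exact this.unique (hasDerivAt_const 0 0)
  set v : {i : Fin N // i ≠ 0} → ℝ := fun i => d i with hv
  have hmv : Jred.mulVec v = -δred := by
    funext i
    have hkey := key i i.2
    set c : Fin N → ℝ := fun j => K i j * Real.cos (ψ 0 j - ψ 0 i) with hc
    have hexp : ∑ j, c j * (d j - d i) = ∑ j, c j * d j - (∑ j, c j) * d i := by
      rw [Finset.sum_mul, ← Finset.sum_sub_distrib]
      apply Finset.sum_congr rfl; intro j _; ring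
    -- sum over subtype equals sum over erase 0
    have hsub : Jred.mulVec v i = ∑ j ∈ Finset.univ.erase (0 : Fin N),
        (if (i : Fin N) = j then -(∑ ℓ ∈ Finset.univ.erase (i : Fin N), c ℓ) else c j) * d j := by
      rw [Matrix.mulVec, dotProduct]
      have step1 : ∑ j : {i : Fin N // i ≠ 0}, Jred i j * v j
          = ∑ j : {i : Fin N // i ≠ 0},
            (if (i : Fin N) = (j : Fin N) then -(∑ ℓ ∈ Finset.univ.erase (i : Fin N), c ℓ) else c j) * d j := by
        apply Finset.sum_congr rfl
        intro j _
        rw [hJred]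
        congr 1
        by_cases h : i = j
        · rw [if_pos h, if_pos (by rw [h])]
        · have h' : (i : Fin N) ≠ (j : Fin N) := fun hh => h (Subtype.ext hh)
          rw [if_neg h, if_neg h']
      rw [step1]
      rw [← Finset.sum_subtype (p := fun j : Fin N => j ≠ 0)
        (s := Finset.univ.erase (0 : Fin N))
        (f := fun j => (if (i : Fin N) = j then -(∑ ℓ ∈ Finset.univ.erase (i : Fin N), c ℓ) else c j) * d j)]
      intro x; simp [Finset.mem_erase]
    have hiS : (i : Fin N) ∈ Finset.univ.erase (0 : Fin N) := by
      simp [Finset.mem_erase, i.2]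
    rw [hsub, ← Finset.add_sum_erase _ _ hiS]
    simp only [eq_self_iff_true, if_true]
    have hrest : ∑ j ∈ (Finset.univ.erase (0:Fin N)).erase (i : Fin N),
        (if (i : Fin N) = j then -(∑ ℓ ∈ Finset.univ.erase (i : Fin N), c ℓ) else c j) * d j
        = ∑ j ∈ (Finset.univ.erase (0:Fin N)).erase (i : Fin N), c j * d j := by
      apply Finset.sum_congr rfl
      intro j hj
      have : (i : Fin N) ≠ j := fun hh => (Finset.mem_erase.mp hj).1 hh.symm
      rw [if_neg this]
    rw [hrest]
    -- now relate to key
    have h1 : ∑ j, c j * d j = c i * d i + ∑ j ∈ (Finset.univ.erase (0:Fin N)).erase (i:Fin N), c j * d j := by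
      have e1 : ∑ j, c j * d j = ∑ j ∈ Finset.univ.erase (0:Fin N), c j * d j := by
        rw [← Finset.add_sum_erase _ _ (Finset.mem_univ (0:Fin N))]
        simp [hd0]
      rw [e1, ← Finset.add_sum_erase _ _ hiS]
    have h2 : ∑ j, c j = c i + ∑ ℓ ∈ Finset.univ.erase (i:Fin N), c ℓ := by
      rw [← Finset.add_sum_erase _ _ (Finset.mem_univ (i:Fin N))]
    rw [hexp, h1, h2] at hkey
    simp only [Pi.neg_apply, hδred, hv]
    linear_combination hkey
  have hdetu : IsUnit Jred.det := (Matrix.isUnit_iff_isUnit_det _).mp hinv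
  have hvsol : v = -(Jred⁻¹.mulVec δred) := by
    have : Jred⁻¹.mulVec (Jred.mulVec v) = v := by
      rw [Matrix.mulVec_mulVec, Matrix.nonsing_inv_mul _ hdetu, Matrix.one_mulVec]
    rw [← this, hmv, Matrix.mulVec_neg]
  have part1 : ∀ i : {i : Fin N // i ≠ 0},
      deriv (fun s => ψ s i) 0 = -(Jred⁻¹.mulVec δred) i := by
    intro i
    have := congrFun hvsol i
    simpa [hv, hd] using this
  refine ⟨part1, ?_⟩
  -- part 2
  have hLfun : (fun s => L (ψ s)) = fun s => (1/2) * ∑ i ∈ O, (ψ s i - t i)^2 := by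
    funext s; rw [hL]
  have hLD : HasDerivAt (fun s => L (ψ s)) (∑ i ∈ O, (ψ 0 i - t i) * d i) 0 := by
    rw [hLfun]
    have : HasDerivAt (fun s => ∑ i ∈ O, (ψ s i - t i)^2)
        (∑ i ∈ O, 2 * (ψ 0 i - t i) * d i) 0 := by
      apply HasDerivAt.fun_sum
      intro i _
      have := ((hD i).sub_const (t i)).fun_pow 2
      simpa [mul_comm, mul_assoc, mul_left_comm] using this
    have h := this.const_mul (1/2 : ℝ)
    refine h.congr_deriv ?_
    rw [Finset.mul_sum]
    apply Finset.sum_congr rfl; intro i _; ring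
  rw [hLD.deriv]
  -- compute RHS
  have hdot : dotProduct ((Jred⁻¹)ᵀ.mulVec e) δred
      = dotProduct e (Jred⁻¹.mulVec δred) := by
    rw [Matrix.mulVec_transpose, ← Matrix.dotProduct_mulVec]
  rw [hdot]
  have hmvd : Jred⁻¹.mulVec δred = -v := by rw [hvsol]; simp
  rw [hmvd]
  rw [dotProduct]
  simp only [Pi.neg_apply, mul_neg, Finset.sum_neg_distrib, neg_neg]
  -- ∑ i : subtype, e i * v i = ∑ i ∈ O, (ψ 0 i - t i) * d i
  have hOS : O ⊆ Finset.univ.erase (0 : Fin N) := by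
    intro x hx
    simp only [Finset.mem_erase, Finset.mem_univ, and_true]
    rintro rfl; exact hO hx
  symm
  calc ∑ x : {i : Fin N // i ≠ 0}, e x * v x
      = ∑ x : {i : Fin N // i ≠ 0},
          (fun j : Fin N => (if j ∈ O then (ψ 0 j - t j) * d j else 0)) (x : Fin N) := by
        apply Finset.sum_congr rfl
        intro x _
        rw [he]
        by_cases h : (x : Fin N) ∈ O <;> simp [h, hv]
    _ = ∑ j ∈ Finset.univ.erase (0 : Fin N),
          (if j ∈ O then (ψ 0 j - t j) * d j else 0) :=
        (Finset.sum_subtype (Finset.univ.erase (0 : Fin N))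
          (fun x => by simp [Finset.mem_erase])
          (fun j => if j ∈ O then (ψ 0 j - t j) * d j else 0)).symm
    _ = ∑ j ∈ (Finset.univ.erase (0 : Fin N)) ∩ O, (ψ 0 j - t j) * d j :=
        Finset.sum_ite_mem _ _ _
    _ = ∑ i ∈ O, (ψ 0 i - t i) * d i := by
        rw [Finset.inter_eq_right.mpr hOS]
end

section
/- Phase-gradient identity. Let N ≥ 2, let K : Fin N → Fin N → ℝ satisfy K i j = K j i for all i, j, let ω : Fin N → ℝ with ω^c_i = ω i − (1/N) * ∑_ℓ ω ℓ, let O ⊆ Fin N with 0 ∉ O, t : Fin N → ℝ, and fix an unpinned index k ≠ 0. Suppose: (i) θ : ℝ → (Fin N → ℝ) is differentiable at 0 with θ(β) 0 = 0 for all β and satisfies the nudged equilibrium condition for all β and all i ≠ 0: ω^c_i + ∑_j K i j * sin(θ(β) j − θ(β) i) − β * (θ(β) i − t i) * [i ∈ O] = 0; (ii) ψ : ℝ → (Fin N → ℝ) is differentiable at 0 with ψ(s) 0 = 0 for all s and satisfies, for all s and all i ≠ 0, (ω^c_i + s * [i = k]) + ∑_j K i j * sin(ψ(s) j − ψ(s)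 i) = 0; (iii) θ(0) = ψ(0) = θ*, and the reduced Jacobian J̃ of J(θ*) on indices ≠ 0 is invertible. Then the limit as β → 0 of (θ(β) k − θ* k)/β exists and equals the negative of the derivative d/ds L(ψ(s)) at s = 0, where L(θ) = (1/2) * ∑_{i ∈ O} (θ i − t i)^2. That is, the phase displacement of oscillator k under output nudging is exactly the negative gradient of the loss with respect to its mean-centered natural frequency. -/
open Finset Real Filter Topology

/-- Phase-gradient identity: at a stable equilibrium of a symmetric Kuramoto network, the
phase displacement of oscillator `k` under weak output nudging, normalized by the nudging
strength `β`, converges as `β → 0` to the negative gradient of the output loss with respect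
to the mean-centered natural frequency of oscillator `k`. -/
theorem phase_gradient_identity (N : ℕ) (hN : 2 ≤ N) [NeZero N]
    (K : Fin N → Fin N → ℝ) (hK : ∀ i j, K i j = K j i)
    (ω : Fin N → ℝ)
    (ωc : Fin N → ℝ) (hωc : ∀ i, ωc i = ω i - (1 / (N : ℝ)) * ∑ ℓ, ω ℓ)
    (O : Finset (Fin N)) (hO : (0 : Fin N) ∉ O)
    (t : Fin N → ℝ)
    (k : Fin N) (hk : k ≠ 0)
    (θ : ℝ → Fin N → ℝ)
    (hθdiff : DifferentiableAt ℝ θ 0)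
    (hθpin : ∀ β, θ β 0 = 0)
    (hθeq : ∀ β, ∀ i : Fin N, i ≠ 0 →
      ωc i + ∑ j, K i j * Real.sin (θ β j - θ β i)
        - β * (θ β i - t i) * (if i ∈ O then 1 else 0) = 0)
    (ψ : ℝ → Fin N → ℝ)
    (hψdiff : DifferentiableAt ℝ ψ 0)
    (hψpin : ∀ s, ψ s 0 = 0)
    (hψeq : ∀ s, ∀ i : Fin N, i ≠ 0 →
      (ωc i + s * (if i = k then 1 else 0))
        + ∑ j, K i j * Real.sin (ψ s j - ψ s i) = 0)
    (θstar : Fin N → ℝ) (hθ0 : θ 0 = θstar) (hψ0 : ψ 0 = θstar)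
    (Jred : Matrix {i : Fin N // i ≠ 0} {i : Fin N // i ≠ 0} ℝ)
    (hJred : ∀ i j : {i : Fin N // i ≠ 0}, Jred i j =
      if i = j then
        -(∑ ℓ ∈ Finset.univ.erase (i : Fin N),
            K i ℓ * Real.cos (θstar ℓ - θstar i))
      else K i j * Real.cos (θstar j - θstar i))
    (hinv : IsUnit Jred)
    (L : (Fin N → ℝ) → ℝ)
    (hL : ∀ θ', L θ' = (1 / 2) * ∑ i ∈ O, (θ' i - t i) ^ 2) :
    Tendsto (fun β => (θ β k - θstar k) / β) (𝓝[≠] (0 : ℝ))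
      (𝓝 (-(deriv (fun s => L (ψ s)) 0))) := by
  classical
  -- component derivatives
  set u : Fin N → ℝ := fun i => deriv (fun β => θ β i) 0 with hu_def
  set v : Fin N → ℝ := fun i => deriv (fun s => ψ s i) 0 with hv_def
  have hθd : ∀ i, DifferentiableAt ℝ (fun β => θ β i) 0 := fun i =>
    (differentiableAt_pi.mp hθdiff) i
  have hψd : ∀ i, DifferentiableAt ℝ (fun s => ψ s i) 0 := fun i =>
    (differentiableAt_pi.mp hψdiff) i
  have hu : ∀ i, HasDerivAt (fun β => θ β i) (u i) 0 := fun i => (hθd i).hasDerivAt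
  have hv : ∀ i, HasDerivAt (fun s => ψ s i) (v i) 0 := fun i => (hψd i).hasDerivAt
  have hu0 : u 0 = 0 := by
    have : (fun β => θ β 0) = fun _ : ℝ => (0 : ℝ) := funext hθpin
    simp [hu_def, this]
  have hv0 : v 0 = 0 := by
    have : (fun s => ψ s 0) = fun _ : ℝ => (0 : ℝ) := funext hψpin
    simp [hv_def, this]
  set c : Fin N → Fin N → ℝ := fun i j => K i j * Real.cos (θstar j - θstar i) with hc_def
  have hcsymm : ∀ i j, c i j = c j i := by
    intro i j
    simp only [hc_def]
    rw [hK i j, ← Real.cos_neg, neg_sub]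
  -- E1
  have E1 : ∀ i : Fin N, i ≠ 0 → ∑ j, c i j * (u j - u i)
      = (θstar i - t i) * (if i ∈ O then 1 else 0) := by
    intro i hi
    have hsum : HasDerivAt (fun β => ∑ j, K i j * Real.sin (θ β j - θ β i))
        (∑ j, K i j * (Real.cos (θ 0 j - θ 0 i) * (u j - u i))) 0 :=
      HasDerivAt.fun_sum fun j _ => (((hu j).sub (hu i)).sin).const_mul (K i j)
    have hprod : HasDerivAt (fun β => β * (θ β i - t i) * (if i ∈ O then 1 else 0))
        ((1 * (θ 0 i - t i) + 0 * u i) * (if i ∈ O then 1 else 0)) 0 := by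
      have h1 : HasDerivAt (fun β : ℝ => β * (θ β i - t i))
          (1 * (θ 0 i - t i) + 0 * u i) 0 := by
        exact (hasDerivAt_id (0:ℝ)).mul ((hu i).sub_const (t i))
      exact h1.mul_const _
    have hF : HasDerivAt (fun β => ωc i + ∑ j, K i j * Real.sin (θ β j - θ β i)
        - β * (θ β i - t i) * (if i ∈ O then 1 else 0))
        (0 + ∑ j, K i j * (Real.cos (θ 0 j - θ 0 i) * (u j - u i))
          - (1 * (θ 0 i - t i) + 0 * u i) * (if i ∈ O then 1 else 0)) 0 :=
      ((hasDerivAt_const 0 (ωc i)).add hsum).sub hprod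
    have hzero : HasDerivAt (fun β => ωc i + ∑ j, K i j * Real.sin (θ β j - θ β i)
        - β * (θ β i - t i) * (if i ∈ O then 1 else 0)) 0 0 := by
      have : (fun β => ωc i + ∑ j, K i j * Real.sin (θ β j - θ β i)
          - β * (θ β i - t i) * (if i ∈ O then 1 else 0)) = fun _ : ℝ => (0:ℝ) :=
        funext fun β => hθeq β i hi
      rw [this]; exact hasDerivAt_const _ _
    have heq := hF.unique hzero
    simp only [hθ0, zero_add, one_mul, zero_mul, add_zero] at heq
    have : ∑ j, c i j * (u j - u i)
        = ∑ j, K i j * (Real.cos (θstar j - θstar i) * (u j - u i)) := by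
      exact Finset.sum_congr rfl fun j _ => by simp [hc_def, mul_assoc]
    rw [this]
    linarith [heq]
  -- E2
  have E2 : ∀ i : Fin N, i ≠ 0 → (if i = k then (1:ℝ) else 0)
      + ∑ j, c i j * (v j - v i) = 0 := by
    intro i hi
    have hsum : HasDerivAt (fun s => ∑ j, K i j * Real.sin (ψ s j - ψ s i))
        (∑ j, K i j * (Real.cos (ψ 0 j - ψ 0 i) * (v j - v i))) 0 :=
      HasDerivAt.fun_sum fun j _ => (((hv j).sub (hv i)).sin).const_mul (K i j)
    have hlin : HasDerivAt (fun s : ℝ => ωc i + s * (if i = k then (1:ℝ) else 0))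
        (1 * (if i = k then (1:ℝ) else 0)) 0 :=
      (((hasDerivAt_id (0:ℝ)).mul_const _)).const_add (ωc i)
    have hF : HasDerivAt (fun s => (ωc i + s * (if i = k then (1:ℝ) else 0))
        + ∑ j, K i j * Real.sin (ψ s j - ψ s i))
        (1 * (if i = k then (1:ℝ) else 0)
          + ∑ j, K i j * (Real.cos (ψ 0 j - ψ 0 i) * (v j - v i))) 0 :=
      hlin.add hsum
    have hzero : HasDerivAt (fun s => (ωc i + s * (if i = k then (1:ℝ) else 0))
        + ∑ j, K i j * Real.sin (ψ s j - ψ s i)) 0 0 := by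
      have : (fun s => (ωc i + s * (if i = k then (1:ℝ) else 0))
          + ∑ j, K i j * Real.sin (ψ s j - ψ s i)) = fun _ : ℝ => (0:ℝ) :=
        funext fun s => hψeq s i hi
      rw [this]; exact hasDerivAt_const _ _
    have heq := hF.unique hzero
    simp only [hψ0, one_mul] at heq
    have : ∑ j, c i j * (v j - v i)
        = ∑ j, K i j * (Real.cos (θstar j - θstar i) * (v j - v i)) := by
      exact Finset.sum_congr rfl fun j _ => by simp [hc_def, mul_assoc]
    rw [this]
    linarith [heq]
  -- symmetry swap identity
  have hswap : ∑ i, v i * ∑ j, c i j * (u j - u i)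
      = ∑ i, u i * ∑ j, c i j * (v j - v i) := by
    have e1 : ∀ w z : Fin N → ℝ, ∑ i, w i * ∑ j, c i j * (z j - z i)
        = (∑ i, ∑ j, c i j * w i * z j) - (∑ i, ∑ j, c i j * w i * z i) := by
      intro w z
      rw [← Finset.sum_sub_distrib]
      refine Finset.sum_congr rfl fun i _ => ?_
      rw [Finset.mul_sum, ← Finset.sum_sub_distrib]
      exact Finset.sum_congr rfl fun j _ => by ring
    have hA : ∑ i, ∑ j, c i j * v i * u j = ∑ i, ∑ j, c i j * u i * v j := by
      rw [Finset.sum_comm]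
      exact Finset.sum_congr rfl fun x _ => Finset.sum_congr rfl fun y _ => by
        rw [hcsymm y x]; ring
    have hB : ∑ i, ∑ j, c i j * v i * u i = ∑ i, ∑ j, c i j * u i * v i :=
      Finset.sum_congr rfl fun i _ => Finset.sum_congr rfl fun j _ => by ring
    rw [e1 v u, e1 u v, hA, hB]
  -- evaluate both sides
  have hS1 : ∑ i, v i * ∑ j, c i j * (u j - u i)
      = ∑ i ∈ O, (θstar i - t i) * v i := by
    have h1 : ∑ i, v i * ∑ j, c i j * (u j - u i)
        = ∑ i, (if i ∈ O then (θstar i - t i) * v i else 0) := by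
      refine Finset.sum_congr rfl fun i _ => ?_
      rcases eq_or_ne i 0 with h | h
      · subst h; simp [hv0, hO]
      · rw [E1 i h]
        split_ifs <;> ring
    rw [h1, Finset.sum_ite_mem, Finset.univ_inter]
  have hS2 : ∑ i, u i * ∑ j, c i j * (v j - v i) = -u k := by
    have h1 : ∑ i, u i * ∑ j, c i j * (v j - v i)
        = ∑ i, (if i = k then -u i else 0) := by
      refine Finset.sum_congr rfl fun i _ => ?_
      rcases eq_or_ne i 0 with h | h
      · subst h; simp [hu0]
      · have := E2 i h
        have h2 : ∑ j, c i j * (v j - v i) = -(if i = k then (1:ℝ) else 0) := by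
          linarith
        rw [h2]
        split_ifs <;> ring
    rw [h1, Finset.sum_ite_eq' Finset.univ k fun i => -u i]
    simp
  have hukey : u k = -∑ i ∈ O, (θstar i - t i) * v i := by
    rw [← hS1, hswap, hS2, neg_neg]
  -- derivative of the loss along ψ
  have hLd : HasDerivAt (fun s => L (ψ s))
      (∑ i ∈ O, (θstar i - t i) * v i) 0 := by
    have hfun : (fun s => L (ψ s)) = fun s => (1/2 : ℝ) * ∑ i ∈ O, (ψ s i - t i) ^ 2 :=
      funext fun s => hL _
    rw [hfun]
    have h1 : HasDerivAt (fun s => ∑ i ∈ O, (ψ s i - t i) ^ 2)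
        (∑ i ∈ O, ((2:ℕ) * (ψ 0 i - t i) ^ 1 * v i)) 0 :=
      HasDerivAt.fun_sum fun i _ => ((hv i).sub_const (t i)).pow 2
    have this : HasDerivAt (fun s => (1/2 : ℝ) * ∑ i ∈ O, (ψ s i - t i) ^ 2)
        ((1/2 : ℝ) * ∑ i ∈ O, ((2:ℕ) * (ψ 0 i - t i) ^ 1 * v i)) 0 := h1.const_mul (1/2 : ℝ)
    convert this using 1
    rw [Finset.mul_sum]
    refine Finset.sum_congr rfl fun i _ => ?_
    simp only [hψ0, pow_one, Nat.cast_ofNat]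
    ring
  have hderiv : deriv (fun s => L (ψ s)) 0 = ∑ i ∈ O, (θstar i - t i) * v i :=
    hLd.deriv
  -- conclude via slope
  have hkd : HasDerivAt (fun β => θ β k) (u k) 0 := hu k
  rw [hasDerivAt_iff_tendsto_slope] at hkd
  have hfeq : (fun β => (θ β k - θstar k) / β) = slope (fun β => θ β k) 0 := by
    funext β
    rw [slope_def_field, hθ0]
    simp [div_eq_iff]
  rw [hfeq, hderiv, ← hukey]
  exact hkd
end

section
/- Coupling-gradient formula. Let N ≥ 2, let K : Fin N → Fin N → ℝ satisfy K i j = K j i for all i, j, let ω : Fin N → ℝ with ω^c_i = ω i − (1/N) * ∑_ℓ ω ℓ, let O ⊆ Fin N with 0 ∉ O, t : Fin N → ℝ, and fix a pair p ≠ q. Suppose: (i) θ : ℝ → (Fin N → ℝ) is differentiable at 0 with θ(β) 0 = 0 for all β, satisfying for all β and i ≠ 0 the nudged equilibrium condition ω^c_i + ∑_j K i j * sin(θ(β) j − θ(β) i) − β * (θ(β) i − t i) * [i ∈ O] = 0; (ii) φ : ℝ → (Fin N → ℝ) is differentiable at 0 with φ(s) 0 = 0 for all s, satisfying for all s and i ≠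 0 the equilibrium condition with coupling K replaced by K + s·(E_{pq} + E_{qp}) (the symmetric perturbation of the single edge (p,q)), where E_{pq} is the matrix unit; (iii) θ(0) = φ(0) = θ*, and the reduced Jacobian J̃ of J(θ*) on indices ≠ 0 is invertible. Then d/ds L(φ(s)) at s = 0 equals the limit as β → 0 of (1/β) * (cos(θ* q − θ* p) − cos(θ(β) q − θ(β) p)), where L(θ) = (1/2) * ∑_{i ∈ O} (θ i − t i)^2. -/
open Finset Real Filter Topology

/-- Coupling-gradient formula: the derivative of the equilibrium loss with respect to a
symmetric perturbation of the single coupling edge `(p, q)` equals the limit as `β → 0` of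
`(1/β) (cos(θ*_q − θ*_p) − cos(θ^β_q − θ^β_p))`, read off from the free and nudged
equilibria. -/
theorem coupling_gradient_formula (N : ℕ) (hN : 2 ≤ N) [NeZero N]
    (K : Fin N → Fin N → ℝ) (hK : ∀ i j, K i j = K j i)
    (ω : Fin N → ℝ)
    (ωc : Fin N → ℝ) (hωc : ∀ i, ωc i = ω i - (1 / (N : ℝ)) * ∑ ℓ, ω ℓ)
    (O : Finset (Fin N)) (hO : (0 : Fin N) ∉ O)
    (t : Fin N → ℝ)
    (p q : Fin N) (hpq : p ≠ q)
    (θ : ℝ → Fin N → ℝ)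
    (hθdiff : DifferentiableAt ℝ θ 0)
    (hθpin : ∀ β, θ β 0 = 0)
    (hθeq : ∀ β, ∀ i : Fin N, i ≠ 0 →
      ωc i + ∑ j, K i j * Real.sin (θ β j - θ β i)
        - β * (θ β i - t i) * (if i ∈ O then 1 else 0) = 0)
    (φ : ℝ → Fin N → ℝ)
    (hφdiff : DifferentiableAt ℝ φ 0)
    (hφpin : ∀ s, φ s 0 = 0)
    (hφeq : ∀ s, ∀ i : Fin N, i ≠ 0 →
      ωc i + ∑ j,
        (K i j + s * ((if i = p ∧ j = q then 1 else 0)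
          + (if i = q ∧ j = p then 1 else 0)))
        * Real.sin (φ s j - φ s i) = 0)
    (θstar : Fin N → ℝ) (hθ0 : θ 0 = θstar) (hφ0 : φ 0 = θstar)
    (Jred : Matrix {i : Fin N // i ≠ 0} {i : Fin N // i ≠ 0} ℝ)
    (hJred : ∀ i j : {i : Fin N // i ≠ 0}, Jred i j =
      if i = j then
        -(∑ ℓ ∈ Finset.univ.erase (i : Fin N),
            K i ℓ * Real.cos (θstar ℓ - θstar i))
      else K i j * Real.cos (θstar j - θstar i))
    (hinv : IsUnit Jred)
    (L : (Fin N → ℝ) → ℝ)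
    (hL : ∀ θ', L θ' = (1 / 2) * ∑ i ∈ O, (θ' i - t i) ^ 2) :
    Tendsto (fun β => (1 / β) *
        (Real.cos (θstar q - θstar p) - Real.cos (θ β q - θ β p)))
      (𝓝[≠] (0 : ℝ)) (𝓝 (deriv (fun s => L (φ s)) 0)) := by
  classical
  set u : Fin N → ℝ := fun i => deriv (fun β => θ β i) 0 with hu_def
  set v : Fin N → ℝ := fun i => deriv (fun s => φ s i) 0 with hv_def
  have hθi : ∀ i, HasDerivAt (fun β => θ β i) (u i) 0 := fun i =>
    (differentiableAt_pi.mp hθdiff i).hasDerivAt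
  have hφi : ∀ i, HasDerivAt (fun s => φ s i) (v i) 0 := fun i =>
    (differentiableAt_pi.mp hφdiff i).hasDerivAt
  have hu0 : u 0 = 0 := by
    have h : (fun β => θ β 0) = fun _ => (0 : ℝ) := funext hθpin
    simp [hu_def, h]
  have hv0 : v 0 = 0 := by
    have h : (fun s => φ s 0) = fun _ => (0 : ℝ) := funext hφpin
    simp [hv_def, h]
  set c : Fin N → Fin N → ℝ := fun i j => K i j * Real.cos (θstar j - θstar i)
    with hc_def
  have hcsym : ∀ i j, c i j = c j i := by
    intro i j
    simp only [hc_def]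
    rw [hK i j, ← Real.cos_neg, neg_sub]
  -- equation A : linearization of the nudged equilibrium in β at 0
  have hA : ∀ i : Fin N, i ≠ 0 →
      ∑ j, c i j * (u j - u i) = (θstar i - t i) * (if i ∈ O then 1 else 0) := by
    intro i hi
    have hD : HasDerivAt (fun β => ωc i + ∑ j, K i j * Real.sin (θ β j - θ β i)
        - β * (θ β i - t i) * (if i ∈ O then 1 else 0))
        ((∑ j, K i j * (Real.cos (θ 0 j - θ 0 i) * (u j - u i)))
          - (1 * (θ 0 i - t i) + 0 * u i) * (if i ∈ O then 1 else 0)) 0 := by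
      refine HasDerivAt.fun_sub (HasDerivAt.const_add _ (HasDerivAt.fun_sum ?_)) ?_
      · intro j _
        exact (((hθi j).fun_sub (hθi i)).sin).const_mul (K i j)
      · exact ((hasDerivAt_id 0).mul ((hθi i).sub_const (t i))).mul_const _
    have hz : (fun β => ωc i + ∑ j, K i j * Real.sin (θ β j - θ β i)
        - β * (θ β i - t i) * (if i ∈ O then 1 else 0)) = fun _ => (0 : ℝ) :=
      funext fun β => hθeq β i hi
    rw [hz] at hD
    have h0 := hD.unique (hasDerivAt_const 0 0)
    rw [hθ0] at h0
    have : ∑ j, c i j * (u j - u i)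
        = ∑ j, K i j * (Real.cos (θstar j - θstar i) * (u j - u i)) := by
      exact Finset.sum_congr rfl fun j _ => by rw [hc_def]; ring
    rw [this]
    have h1 : (1 * (θstar i - t i) + 0 * u i) = θstar i - t i := by ring
    rw [h1] at h0
    linarith [h0]
  -- equation B : linearization of the perturbed equilibrium in s at 0
  have hB : ∀ i : Fin N, i ≠ 0 →
      ∑ j, c i j * (v j - v i)
        = -(∑ j, ((if i = p ∧ j = q then (1:ℝ) else 0)
            + (if i = q ∧ j = p then 1 else 0)) * Real.sin (θstar j - θstar i)) := by
    intro i hi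
    have hD : HasDerivAt (fun s => ωc i + ∑ j,
        (K i j + s * ((if i = p ∧ j = q then (1:ℝ) else 0)
          + (if i = q ∧ j = p then 1 else 0))) * Real.sin (φ s j - φ s i))
        (∑ j, (((if i = p ∧ j = q then (1:ℝ) else 0)
            + (if i = q ∧ j = p then 1 else 0)) * Real.sin (φ 0 j - φ 0 i)
          + K i j * (Real.cos (φ 0 j - φ 0 i) * (v j - v i)))) 0 := by
      refine HasDerivAt.const_add _ (HasDerivAt.fun_sum ?_)
      intro j _
      have h := ((hasDerivAt_const (0:ℝ) (K i j)).fun_add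
          ((hasDerivAt_id (0:ℝ)).mul_const ((if i = p ∧ j = q then (1:ℝ) else 0)
            + (if i = q ∧ j = p then 1 else 0)))).fun_mul (((hφi j).fun_sub (hφi i)).sin)
      have harr : (0 + 1 * ((if i = p ∧ j = q then (1:ℝ) else 0)
            + (if i = q ∧ j = p then 1 else 0))) * Real.sin (φ 0 j - φ 0 i)
          + (K i j + id (0:ℝ) * ((if i = p ∧ j = q then (1:ℝ) else 0)
            + (if i = q ∧ j = p then 1 else 0)))
            * (Real.cos (φ 0 j - φ 0 i) * (v j - v i))
          = ((if i = p ∧ j = q then (1:ℝ) else 0)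
            + (if i = q ∧ j = p then 1 else 0)) * Real.sin (φ 0 j - φ 0 i)
          + K i j * (Real.cos (φ 0 j - φ 0 i) * (v j - v i)) := by
        simp only [id]; ring
      rw [harr] at h
      exact h
    have hz : (fun s => ωc i + ∑ j,
        (K i j + s * ((if i = p ∧ j = q then (1:ℝ) else 0)
          + (if i = q ∧ j = p then 1 else 0))) * Real.sin (φ s j - φ s i))
        = fun _ => (0 : ℝ) := funext fun s => hφeq s i hi
    rw [hz] at hD
    have h0 := hD.unique (hasDerivAt_const 0 0)
    rw [hφ0] at h0
    have h1 : ∑ j, (((if i = p ∧ j = q then (1:ℝ) else 0)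
            + (if i = q ∧ j = p then 1 else 0)) * Real.sin (θstar j - θstar i)
          + K i j * (Real.cos (θstar j - θstar i) * (v j - v i)))
        = (∑ j, ((if i = p ∧ j = q then (1:ℝ) else 0)
            + (if i = q ∧ j = p then 1 else 0)) * Real.sin (θstar j - θstar i))
          + ∑ j, c i j * (v j - v i) := by
      rw [← Finset.sum_add_distrib]
      exact Finset.sum_congr rfl fun j _ => by rw [hc_def]; ring
    rw [h1] at h0
    linarith [h0]
  -- key algebraic identity
  have key : ∑ i ∈ O, (θstar i - t i) * v i
      = Real.sin (θstar q - θstar p) * (u q - u p) := by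
    have e1 : ∑ i ∈ O, (θstar i - t i) * v i
        = ∑ i ∈ Finset.univ.erase 0,
            ((θstar i - t i) * (if i ∈ O then 1 else 0)) * v i := by
      rw [Finset.sum_erase _ (by simp [hO])]
      simp only [mul_ite, mul_one, mul_zero, ite_mul, zero_mul]
      rw [Finset.sum_ite_mem, Finset.univ_inter]
    have e2 : ∑ i ∈ Finset.univ.erase 0,
          ((θstar i - t i) * (if i ∈ O then 1 else 0)) * v i
        = ∑ i ∈ Finset.univ.erase 0, (∑ j, c i j * (u j - u i)) * v i :=
      Finset.sum_congr rfl fun i hi => by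
        rw [hA i (Finset.ne_of_mem_erase hi)]
    have e3 : ∑ i ∈ Finset.univ.erase 0, (∑ j, c i j * (u j - u i)) * v i
        = ∑ i ∈ Finset.univ.erase 0, (∑ j, c i j * (v j - v i)) * u i := by
      rw [Finset.sum_erase _ (by simp [hv0]), Finset.sum_erase _ (by simp [hu0])]
      simp only [Finset.sum_mul, sub_mul, mul_sub, Finset.sum_sub_distrib]
      congr 1
      · rw [Finset.sum_comm]
        exact Finset.sum_congr rfl fun i _ => Finset.sum_congr rfl fun j _ => by
          rw [hcsym i j]; ring
      · exact Finset.sum_congr rfl fun i _ => Finset.sum_congr rfl fun j _ => by ring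
    have e4 : ∑ i ∈ Finset.univ.erase 0, (∑ j, c i j * (v j - v i)) * u i
        = ∑ i, (-(∑ j, ((if i = p ∧ j = q then (1:ℝ) else 0)
            + (if i = q ∧ j = p then 1 else 0)) * Real.sin (θstar j - θstar i))) * u i := by
      rw [Finset.sum_congr rfl (fun i hi => by
        rw [hB i (Finset.ne_of_mem_erase hi)])]
      exact Finset.sum_erase _ (by simp [hu0])
    have e5 : ∑ i, (-(∑ j, ((if i = p ∧ j = q then (1:ℝ) else 0)
            + (if i = q ∧ j = p then 1 else 0)) * Real.sin (θstar j - θstar i))) * u i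
        = Real.sin (θstar q - θstar p) * (u q - u p) := by
      have inner : ∀ i : Fin N, ∑ j, ((if i = p ∧ j = q then (1:ℝ) else 0)
            + (if i = q ∧ j = p then 1 else 0)) * Real.sin (θstar j - θstar i)
          = (if i = p then Real.sin (θstar q - θstar p) else 0)
            + (if i = q then Real.sin (θstar p - θstar q) else 0) := by
        intro i
        simp only [add_mul, ite_mul, one_mul, zero_mul, Finset.sum_add_distrib, ite_and]
        congr 1
        · by_cases h : i = p <;> simp [h, Finset.sum_ite_eq']
        · by_cases h : i = q <;> simp [h, Finset.sum_ite_eq']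
      have hsin : Real.sin (θstar p - θstar q) = -Real.sin (θstar q - θstar p) := by
        rw [← Real.sin_neg, neg_sub]
      have step : ∀ i : Fin N,
          (-((if i = p then Real.sin (θstar q - θstar p) else 0)
            + (if i = q then Real.sin (θstar p - θstar q) else 0))) * u i
          = (if i = p then -(Real.sin (θstar q - θstar p)) * u i else 0)
            + (if i = q then Real.sin (θstar q - θstar p) * u i else 0) := by
        intro i
        rw [hsin]
        by_cases hp' : i = p <;> by_cases hq' : i = q
        · exact absurd (hp'.symm.trans hq') hpq
        · simp [hp', hq', hpq, hpq.symm]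
        · simp [hp', hq', hpq, hpq.symm]
        · simp [hp', hq']
      simp only [inner]
      rw [Finset.sum_congr rfl (fun i _ => step i), Finset.sum_add_distrib,
        Finset.sum_ite_eq', Finset.sum_ite_eq']
      simp only [Finset.mem_univ, if_true]
      ring
    rw [e1, e2, e3, e4, e5]
  -- compute the derivative of the loss along the coupling perturbation
  have hLder : HasDerivAt (fun s => L (φ s))
      (Real.sin (θstar q - θstar p) * (u q - u p)) 0 := by
    have hfun : (fun s => L (φ s))
        = fun s => (1 / 2) * ∑ i ∈ O, (φ s i - t i) ^ 2 := funext fun s => hL (φ s)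
    rw [hfun]
    have hD : HasDerivAt (fun s => ∑ i ∈ O, (φ s i - t i) ^ 2)
        (∑ i ∈ O, 2 * (φ 0 i - t i) ^ 1 * v i) 0 := by
      refine HasDerivAt.fun_sum ?_
      intro i _
      simpa using (((hφi i).sub_const (t i)).fun_pow 2)
    have h2 := hD.const_mul (1 / 2 : ℝ)
    have : (1 / 2 : ℝ) * ∑ i ∈ O, 2 * (φ 0 i - t i) ^ 1 * v i
        = Real.sin (θstar q - θstar p) * (u q - u p) := by
      rw [hφ0, ← key, Finset.mul_sum]
      exact Finset.sum_congr rfl fun i _ => by ring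
    rwa [this] at h2
  rw [hLder.deriv]
  -- the limit side
  have hcos : HasDerivAt (fun β => Real.cos (θ β q - θ β p))
      (-Real.sin (θstar q - θstar p) * (u q - u p)) 0 := by
    have h := ((hθi q).fun_sub (hθi p)).cos
    rwa [hθ0] at h
  have hslope := hasDerivAt_iff_tendsto_slope.mp hcos
  have hneg := hslope.neg
  have hfun : (fun β => -slope (fun β => Real.cos (θ β q - θ β p)) 0 β)
      = fun β => (1 / β) * (Real.cos (θstar q - θstar p) - Real.cos (θ β q - θ β p)) := by
    funext β
    rw [slope_def_field, hθ0]
    field_simp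
    ring
  rw [hfun] at hneg
  have : -(-Real.sin (θstar q - θstar p) * (u q - u p))
      = Real.sin (θstar q - θstar p) * (u q - u p) := by ring
  rwa [this] at hneg
end

section
/- Equilibrium propagation in finite dimensions. Let n ≥ 1, let E : (Fin n → ℝ) × ℝ → ℝ be twice continuously differentiable, let C : (Fin n → ℝ) → ℝ be continuously differentiable, and fix λ₀ : ℝ. Suppose θ : ℝ × ℝ → (Fin n → ℝ) is differentiable at (0, λ₀) and satisfies, for all (β, λ) in a neighborhood of (0, λ₀), the stationarity condition ∇_θ E(θ(β, λ), λ) + β • ∇C(θ(β, λ)) = 0, and that the Hessian of E in θ at (θ(0, λ₀), λ₀) is invertible. Then the derivative of λ ↦ C(θ(0, λ)) at λ = λ₀ equals the derivative of β ↦ (∂E/∂λ)(θ(β, λ₀), λ₀) at β = 0; equivalently, d/dλ C(θ(0, λ))|_{λ₀} = lim_{β → 0} (1/β) * [(∂E/∂λ)(θ(β, λ₀), λ₀) − (∂E/∂λ)(θ(0, λ₀), λ₀)]. -/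
open Finset Real Filter Topology

/-- Derivative of `p ↦ p.1 • v p` at a point with vanishing first coordinate,
assuming only continuity of `v`. -/
lemma smul_cont_hasFDerivAt {F : Type*} [NormedAddCommGroup F] [NormedSpace ℝ F]
    (v : ℝ × ℝ → F) (p₀ : ℝ × ℝ) (h0 : p₀.1 = 0) (hv : ContinuousAt v p₀) :
    HasFDerivAt (fun p : ℝ × ℝ => p.1 • v p)
      ((ContinuousLinearMap.fst ℝ ℝ ℝ).smulRight (v p₀)) p₀ := by
  rw [hasFDerivAt_iff_isLittleO]
  have hrw : (fun p : ℝ × ℝ => p.1 • v p - p₀.1 • v p₀ -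
      ((ContinuousLinearMap.fst ℝ ℝ ℝ).smulRight (v p₀)) (p - p₀))
      = fun p : ℝ × ℝ => p.1 • (v p - v p₀) := by
    funext p
    simp [h0, smul_sub, sub_smul]
  rw [hrw, Asymptotics.isLittleO_iff]
  intro c hc
  have hvt : Filter.Tendsto (fun p => ‖v p - v p₀‖) (𝓝 p₀) (𝓝 0) := by
    have h1 : Filter.Tendsto (fun p => v p - v p₀) (𝓝 p₀) (𝓝 (v p₀ - v p₀)) :=
      (hv.sub continuousAt_const)
    simpa using h1.norm
  filter_upwards [hvt.eventually_lt_const hc] with p hp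
  have h1 : ‖p.1 • (v p - v p₀)‖ = |p.1| * ‖v p - v p₀‖ := norm_smul _ _
  have h2 : |p.1| ≤ ‖p - p₀‖ := by
    have h3 : |p.1| = ‖(p - p₀).1‖ := by simp [h0]
    rw [h3]
    exact norm_fst_le _
  calc ‖p.1 • (v p - v p₀)‖ = |p.1| * ‖v p - v p₀‖ := h1
    _ ≤ ‖p - p₀‖ * c :=
        mul_le_mul h2 hp.le (norm_nonneg _) (norm_nonneg _)
    _ = c * ‖p - p₀‖ := mul_comm _ _

set_option maxHeartbeats 2000000 in
/-- Equilibrium propagation in finite dimensions: for a C² energy `E(θ, λ)` and C¹ cost `C`,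
if `θ(β, λ)` is a family of stationary points of `E(·, λ) + β·C` with invertible Hessian at
the free equilibrium, then the derivative of the equilibrium cost `λ ↦ C(θ(0, λ))` at `λ₀`
equals the `β`-derivative at `0` of `β ↦ (∂E/∂λ)(θ(β, λ₀), λ₀)`. -/
theorem equilibrium_propagation (n : ℕ) (hn : 1 ≤ n)
    (E : (Fin n → ℝ) × ℝ → ℝ) (hE : ContDiff ℝ 2 E)
    (C : (Fin n → ℝ) → ℝ) (hC : ContDiff ℝ 1 C)
    (lam₀ : ℝ)
    (θ : ℝ × ℝ → Fin n → ℝ)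
    (hθ : DifferentiableAt ℝ θ ((0 : ℝ), lam₀))
    (hstat : ∀ᶠ p : ℝ × ℝ in 𝓝 ((0 : ℝ), lam₀),
      fderiv ℝ (fun x => E (x, p.2)) (θ p) + p.1 • fderiv ℝ C (θ p) = 0)
    (H : Matrix (Fin n) (Fin n) ℝ)
    (hH : ∀ i j, H i j =
      fderiv ℝ (fun x => fderiv ℝ (fun y => E (y, lam₀)) x (Pi.single i 1))
        (θ (0, lam₀)) (Pi.single j 1))
    (hHinv : IsUnit H) :
    deriv (fun l => C (θ (0, l))) lam₀
      = deriv (fun β => deriv (fun l => E (θ (β, lam₀), l)) lam₀) 0 := by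
  classical
  set p₀ : ℝ × ℝ := ((0 : ℝ), lam₀) with hp₀def
  set θ₀ : Fin n → ℝ := θ p₀ with hθ₀def
  have hEd : Differentiable ℝ E := hE.differentiable (by norm_num)
  have hΦ : ContDiff ℝ 1 (fderiv ℝ E) := hE.fderiv_right le_rfl
  set Φ := fderiv ℝ E with hΦdef
  set S := fderiv ℝ Φ (θ₀, lam₀) with hSdef
  have hSymm : ∀ v w, S v w = S w v := fun v w =>
    (hE.contDiffAt.isSymmSndFDerivAt (by simp [minSmoothness_of_isRCLikeNormedField])) v w
  -- partial derivative in the first variable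
  have hpart₁ : ∀ (x : Fin n → ℝ) (l : ℝ),
      fderiv ℝ (fun y => E (y, l)) x
        = (Φ (x, l)).comp (ContinuousLinearMap.inl ℝ (Fin n → ℝ) ℝ) := by
    intro x l
    exact ((hEd (x, l)).hasFDerivAt.comp x (hasFDerivAt_prodMk_left x l)).fderiv
  -- partial derivative in the second variable
  have hpart₂ : ∀ (x : Fin n → ℝ) (l : ℝ),
      HasDerivAt (fun l' => E (x, l')) (Φ (x, l) (0, 1)) l := by
    intro x l
    exact (hEd (x, l)).hasFDerivAt.comp_hasDerivAt l
      (HasDerivAt.prodMk (hasDerivAt_const l x) (hasDerivAt_id l))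
  -- derivative of the stationarity map
  set Dθ := fderiv ℝ θ p₀ with hDθdef
  set Dψ : (ℝ × ℝ) →L[ℝ] (Fin n → ℝ) × ℝ := Dθ.prod (ContinuousLinearMap.snd ℝ ℝ ℝ) with hDψdef
  have hψ : HasFDerivAt (fun p : ℝ × ℝ => (θ p, p.2)) Dψ p₀ :=
    HasFDerivAt.prodMk hθ.hasFDerivAt hasFDerivAt_snd
  have hΦd : HasFDerivAt Φ S (θ₀, lam₀) :=
    ((hΦ.differentiable one_ne_zero) (θ₀, lam₀)).hasFDerivAt
  set Lc : (((Fin n → ℝ) × ℝ) →L[ℝ] ℝ) →L[ℝ] ((Fin n → ℝ) →L[ℝ] ℝ) :=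
    (ContinuousLinearMap.compL ℝ (Fin n → ℝ) ((Fin n → ℝ) × ℝ) ℝ).flip
      (ContinuousLinearMap.inl ℝ (Fin n → ℝ) ℝ) with hLcdef
  have hg₁ : HasFDerivAt
      (fun p : ℝ × ℝ => (Φ (θ p, p.2)).comp (ContinuousLinearMap.inl ℝ (Fin n → ℝ) ℝ))
      (Lc.comp (S.comp Dψ)) p₀ := by
    have h1 := Lc.hasFDerivAt.comp p₀ (hΦd.comp p₀ hψ)
    have h2 : (fun p : ℝ × ℝ => Lc (Φ (θ p, p.2)))
        = fun p : ℝ × ℝ => (Φ (θ p, p.2)).comp (ContinuousLinearMap.inl ℝ (Fin n → ℝ) ℝ) := by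
      funext p
      simp [hLcdef]
    rw [← h2]
    exact h1
  have hvcont : ContinuousAt (fun p : ℝ × ℝ => fderiv ℝ C (θ p)) p₀ :=
    ((hC.continuous_fderiv one_ne_zero).continuousAt).comp hθ.continuousAt
  have hg₂ : HasFDerivAt (fun p : ℝ × ℝ => p.1 • fderiv ℝ C (θ p))
      ((ContinuousLinearMap.fst ℝ ℝ ℝ).smulRight (fderiv ℝ C θ₀)) p₀ :=
    smul_cont_hasFDerivAt _ p₀ rfl hvcont
  have hgsum : HasFDerivAt
      (fun p : ℝ × ℝ => (Φ (θ p, p.2)).comp (ContinuousLinearMap.inl ℝ (Fin n → ℝ) ℝ)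
        + p.1 • fderiv ℝ C (θ p))
      (Lc.comp (S.comp Dψ) + (ContinuousLinearMap.fst ℝ ℝ ℝ).smulRight (fderiv ℝ C θ₀)) p₀ :=
    hg₁.add hg₂
  have hzero : HasFDerivAt
      (fun p : ℝ × ℝ => (Φ (θ p, p.2)).comp (ContinuousLinearMap.inl ℝ (Fin n → ℝ) ℝ)
        + p.1 • fderiv ℝ C (θ p))
      (0 : (ℝ × ℝ) →L[ℝ] ((Fin n → ℝ) →L[ℝ] ℝ)) p₀ := by
    apply (hasFDerivAt_const (0 : (Fin n → ℝ) →L[ℝ] ℝ) p₀).congr_of_eventuallyEq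
    filter_upwards [hstat] with p hp
    rw [← hpart₁]
    exact hp
  have heq : Lc.comp (S.comp Dψ)
      + (ContinuousLinearMap.fst ℝ ℝ ℝ).smulRight (fderiv ℝ C θ₀) = 0 :=
    hgsum.unique hzero
  have key : ∀ (h : ℝ × ℝ) (w : Fin n → ℝ),
      S (Dθ h, h.2) (w, 0) + h.1 * fderiv ℝ C θ₀ w = 0 := by
    intro h w
    have h1 : (Lc.comp (S.comp Dψ)
        + (ContinuousLinearMap.fst ℝ ℝ ℝ).smulRight (fderiv ℝ C θ₀)) h w
        = (0 : (ℝ × ℝ) →L[ℝ] ((Fin n → ℝ) →L[ℝ] ℝ)) h w := by rw [heq]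
    simp only [ContinuousLinearMap.add_apply, ContinuousLinearMap.coe_comp',
      Function.comp_apply, ContinuousLinearMap.flip_apply, ContinuousLinearMap.compL_apply,
      ContinuousLinearMap.smulRight_apply, ContinuousLinearMap.coe_fst',
      ContinuousLinearMap.prod_apply, ContinuousLinearMap.coe_snd',
      ContinuousLinearMap.inl_apply, ContinuousLinearMap.zero_apply, smul_eq_mul,
      ContinuousLinearMap.smul_apply, hLcdef, hDψdef] at h1
    convert h1 using 2
  -- left-hand side
  have hu : HasDerivAt (fun l => θ (0, l)) (Dθ (0, 1)) lam₀ :=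
    hθ.hasFDerivAt.comp_hasDerivAt lam₀
      (HasDerivAt.prodMk (hasDerivAt_const lam₀ (0 : ℝ)) (hasDerivAt_id lam₀))
  have hLHS : deriv (fun l => C (θ (0, l))) lam₀ = fderiv ℝ C θ₀ (Dθ (0, 1)) :=
    (((hC.differentiable one_ne_zero θ₀).hasFDerivAt).comp_hasDerivAt lam₀ hu).deriv
  -- right-hand side
  have hR1 : (fun β => deriv (fun l => E (θ (β, lam₀), l)) lam₀)
      = fun β => Φ (θ (β, lam₀), lam₀) (0, 1) := by
    funext β
    exact (hpart₂ (θ (β, lam₀)) lam₀).deriv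
  have hb : HasDerivAt (fun β => θ (β, lam₀)) (Dθ (1, 0)) 0 :=
    hθ.hasFDerivAt.comp_hasDerivAt 0 (HasDerivAt.prodMk (hasDerivAt_id (0 : ℝ)) (hasDerivAt_const (0 : ℝ) lam₀))
  have hA : HasFDerivAt (fun x : Fin n → ℝ => Φ (x, lam₀) ((0 : Fin n → ℝ), (1 : ℝ)))
      ((ContinuousLinearMap.apply ℝ ℝ ((0 : Fin n → ℝ), (1 : ℝ))).comp
        (S.comp (ContinuousLinearMap.inl ℝ (Fin n → ℝ) ℝ))) θ₀ := by
    have h1 := (ContinuousLinearMap.apply ℝ ℝ ((0 : Fin n → ℝ), (1 : ℝ))).hasFDerivAt.comp θ₀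
      (hΦd.comp θ₀ (hasFDerivAt_prodMk_left θ₀ lam₀))
    exact h1
  have hRHS : deriv (fun β => Φ (θ (β, lam₀), lam₀) ((0 : Fin n → ℝ), (1 : ℝ))) 0
      = S (Dθ (1, 0), 0) ((0 : Fin n → ℝ), (1 : ℝ)) := by
    have h2 := (hA.comp_hasDerivAt 0 hb).deriv
    simpa [Function.comp_def] using h2
  rw [hLHS, hR1, hRHS]
  -- the algebra
  have e1 := key (1, 0) (Dθ (0, 1))
  have e2 := key (0, 1) (Dθ (1, 0))
  simp only [one_mul, zero_mul, add_zero] at e1 e2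
  have esplit : S (Dθ (0, 1), 1) (Dθ (1, 0), 0)
      = S (Dθ (0, 1), 0) (Dθ (1, 0), 0) + S ((0 : Fin n → ℝ), 1) (Dθ (1, 0), 0) := by
    have hsum : ((Dθ (0, 1), (1 : ℝ)) : (Fin n → ℝ) × ℝ)
        = (Dθ (0, 1), 0) + ((0 : Fin n → ℝ), 1) := by simp [Prod.ext_iff]
    rw [hsum, map_add, ContinuousLinearMap.add_apply]
  have s1 := hSymm (Dθ (1, 0), 0) ((0 : Fin n → ℝ), 1)
  have s2 := hSymm (Dθ (0, 1), 0) (Dθ (1, 0), 0)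
  linarith [e1, e2, esplit, s1, s2]
end
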